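/- Any solution v of the linear system (3λ² - 16)·v = Y(λ)·ṽ with 3λ² - 16 ≠ 0 preserves the centroid of the input: (x_a + x_b + x_c, y_a + y_b + y_c) = (x̃_a + x̃_b + x̃_c, ỹ_a + ỹ_b + ỹ_c). -/
import Mathlib


open Matrix

/-- The matrix `Y(λ)` proportional to the adjugate of the Lagrangian matrix `X(λ)`. -/
noncomputable def Ymat (s lam : ℝ) : Matrix (Fin 6) (Fin 6) ℝ :=
  !![lam^2-16, 0, lam^2, 4*s*lam, lam^2, -(4*s*lam);
     0, lam^2-16, -(4*s*lam), lam^2, 4*s*lam, lam^2;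
     lam^2, -(4*s*lam), lam^2-16, 0, lam^2, 4*s*lam;
     4*s*lam, lam^2, 0, lam^2-16, -(4*s*lam), lam^2;
     lam^2, 4*s*lam, lam^2, -(4*s*lam), lam^2-16, 0;
     -(4*s*lam), lam^2, 4*s*lam, lam^2, 0, lam^2-16]

@[simp]
theorem cons_val_five' {α : Type*} {m : ℕ} (x : α) (u : Fin m.succ.succ.succ.succ.succ → α) :
    Matrix.vecCons x u 5 = Matrix.vecHead (Matrix.vecTail (Matrix.vecTail (Matrix.vecTail (Matrix.vecTail u)))) :=
  rfl

theorem stmt7 (s lam : ℝ) (hs : s = -1 ∨ s = 1) (v vt : Fin 6 → ℝ)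
    (hlin : (3 * lam ^ 2 - 16) • v = Ymat s lam *ᵥ vt)
    (hδ : 3 * lam ^ 2 - 16 ≠ 0) :
    v 0 + v 2 + v 4 = vt 0 + vt 2 + vt 4 ∧
    v 1 + v 3 + v 5 = vt 1 + vt 3 + vt 5 := by
  have h : ∀ i, (3 * lam ^ 2 - 16) * v i = (Ymat s lam *ᵥ vt) i := fun i => congrFun hlin i
  have h0 := h 0; have h1 := h 1; have h2 := h 2
  have h3 := h 3; have h4 := h 4; have h5 := h 5
  simp [Ymat, mulVec, dotProduct, Fin.sum_univ_six, Matrix.cons_val_succ] at h0 h1 h2 h3 h4 h5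
  constructor
  · have : (3 * lam ^ 2 - 16) * (v 0 + v 2 + v 4) = (3 * lam ^ 2 - 16) * (vt 0 + vt 2 + vt 4) := by
      rw [mul_add, mul_add, h0, h2, h4]; ring
    exact mul_left_cancel₀ hδ this
  · have : (3 * lam ^ 2 - 16) * (v 1 + v 3 + v 5) = (3 * lam ^ 2 - 16) * (vt 1 + vt 3 + vt 5) := by
      rw [mul_add, mul_add, h1, h3, h5]; ring
    exact mul_left_cancel₀ hδ this
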